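/- For every 0 < ε < 1 there exists n₀ such that for every integer n ≥ n₀ and every positive integer q with q ≤ (1−ε)·n/2, Client has a strategy in the Client-Waiter game with bias q played on the board E(K_n) guaranteeing that at the end of the game his graph has a connected component containing at least e^{−5/(2ε)+3/2}·n vertices; in other words, C(n,q) ≥ e^{−5/(2ε)+3/2}·n. -/

import Mathlib

/-!
Client's strategy: whenever Waiter offers a pair joining two components of Client's graph,
take it. A round in which Client merges two components lets Waiter claim at most `q + 1`
pairs, and there are at most `n - 1` merges; a round without a merge only offers pairs
inside components. Hence at the end all but `(q + 1)(n - 1)` pairs of `K_n` lie inside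
Client's components, so `∑_v |comp v| = 2 #(internal pairs) + n ≥ n² - 2(q + 1)(n - 1)` and
some component has at least `n - 2(q + 1) ≥ εn - 2` vertices, which beats
`e^{-5/(2ε)+3/2} n ≤ εn/2` once `εn ≥ 4`.
-/


open Finset

variable {α : Type*}

/-- Auxiliary definition: `fuel` bounds the number of remaining rounds; `C` is the set of
elements claimed by Client so far; `F` is the set of free (unclaimed) elements.
`ClientCanAux q P fuel C F` says that Client can guarantee that his final claimed set
satisfies `P` in the Client-Waiter game with bias `q`: in each round Waiter offers a set
`O` of at least one and at most `q+1` free elements, Client claims one element of `O`,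
and Waiter claims the rest. -/
def ClientCanAux [DecidableEq α] (q : ℕ) (P : Finset α → Prop) :
    ℕ → Finset α → Finset α → Prop
  | 0, C, F => F = ∅ ∧ P C
  | fuel + 1, C, F =>
    if F = ∅ then P C
    else ∀ O ⊆ F, O.Nonempty → O.card ≤ q + 1 →
      ∃ x ∈ O, ClientCanAux q P fuel (insert x C) (F \ O)

/-- Client has a strategy in the Client-Waiter game with bias `q` on the board `X`
guaranteeing that the set of elements he has claimed at the end of the game satisfies `P`. -/
def ClientCanForce [DecidableEq α] (X : Finset α) (q : ℕ) (P : Finset α → Prop) : Prop :=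
  ClientCanAux q P X.card ∅ X

/-- Analogue of `ClientCanAux` for Waiter. -/
def WaiterCanAux [DecidableEq α] (q : ℕ) (P : Finset α → Prop) :
    ℕ → Finset α → Finset α → Prop
  | 0, C, F => F = ∅ ∧ P C
  | fuel + 1, C, F =>
    if F = ∅ then P C
    else ∃ O ⊆ F, O.Nonempty ∧ O.card ≤ q + 1 ∧
      ∀ x ∈ O, WaiterCanAux q P fuel (insert x C) (F \ O)

/-- Waiter has a strategy in the Client-Waiter game with bias `q` on the board `X`
guaranteeing that the set of elements claimed by Client at the end of the game
satisfies `P`. -/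
def WaiterCanForce [DecidableEq α] (X : Finset α) (q : ℕ) (P : Finset α → Prop) : Prop :=
  WaiterCanAux q P X.card ∅ X

/-- Client's graph: the graph whose edges are the edges claimed by Client. -/
def clientGraph {V : Type*} (C : Finset (Sym2 V)) : SimpleGraph V :=
  SimpleGraph.fromEdgeSet (↑C)

/-- The board for games played on `K_n`: the edge set of the complete graph on `n` vertices. -/
def Kboard (n : ℕ) : Finset (Sym2 (Fin n)) :=
  (⊤ : SimpleGraph (Fin n)).edgeFinset

/-- `G` contains a copy of `H`. -/
def ContainsCopy {W V : Type*} (H : SimpleGraph W) (G : SimpleGraph V) : Prop :=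
  ∃ f : W → V, Function.Injective f ∧ ∀ ⦃a b : W⦄, H.Adj a b → G.Adj (f a) (f b)

/-- The 2-density `d₂(H)` of a graph `H`. -/
noncomputable def twoDensity {β : Type*} (H : SimpleGraph β) : ℝ :=
  if 3 ≤ Nat.card β then ((H.edgeSet.ncard : ℝ) - 1) / ((Nat.card β : ℝ) - 2) else 0

/-- The maximum 2-density `m₂(H)` of a graph `H`. -/
noncomputable def maxTwoDensity {β : Type*} (H : SimpleGraph β) : ℝ :=
  sSup {x : ℝ | ∃ H' : H.Subgraph, 3 ≤ H'.verts.ncard ∧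
    x = ((H'.edgeSet.ncard : ℝ) - 1) / ((H'.verts.ncard : ℝ) - 2)}

/-- The maximum density `m(G)` of a graph `G`. -/
noncomputable def maxDensity {β : Type*} (G : SimpleGraph β) : ℝ :=
  sSup {x : ℝ | ∃ G' : G.Subgraph, G'.verts.Nonempty ∧
    x = (G'.edgeSet.ncard : ℝ) / (G'.verts.ncard : ℝ)}

/-- The arboricity `ar(G)` of a graph `G`. -/
noncomputable def arboricity {β : Type*} (G : SimpleGraph β) : ℝ :=
  sSup {x : ℝ | ∃ G' : G.Subgraph, 2 ≤ G'.verts.ncard ∧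
    x = (G'.edgeSet.ncard : ℝ) / ((G'.verts.ncard : ℝ) - 1)}

/-- `H` is strictly 2-balanced: every proper subgraph with at least 3 vertices has
strictly smaller 2-density. -/
def StrictlyTwoBalanced {β : Type*} (H : SimpleGraph β) : Prop :=
  ∀ H' : H.Subgraph, H' ≠ ⊤ → 3 ≤ H'.verts.ncard → twoDensity H'.coe < twoDensity H

open Classical in
/-- The probability that Client has a winning strategy in the `H`-game `CW(G_{n,p}, H, q)`,
where the random graph `G_{n,p}` is generated by keeping each edge of `K_n` independently
with probability `p`. -/
noncomputable def probClientWinsHGame {β : Type*} (H : SimpleGraph β) (q n : ℕ) (p : ℝ) : ℝ :=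
  ∑ E ∈ (Kboard n).powerset,
    p ^ E.card * (1 - p) ^ ((Kboard n).card - E.card) *
      (if ClientCanForce E q (fun C => ContainsCopy H (clientGraph C)) then 1 else 0)

/-- Vertices of the complete `k`-ary rooted tree of height `k`: a vertex at depth `i ≤ k`
is a sequence of `i` choices among `k` children. -/
abbrev TreeVert (k : ℕ) : Type := (i : Fin (k + 1)) × (Fin (i : ℕ) → Fin k)

/-- `u` is a child of `v` in the complete `k`-ary tree. -/
def IsChildOf {k : ℕ} (u v : TreeVert k) : Prop :=
  ∃ h : (u.1 : ℕ) = (v.1 : ℕ) + 1,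
    ∀ t : Fin (v.1 : ℕ), u.2 ⟨t.1, by have := t.2; omega⟩ = v.2 t

/-- The complete `k`-ary tree of height `k`, `T_{k,k}`. -/
def Tkk (k : ℕ) : SimpleGraph (TreeVert k) where
  Adj u v := IsChildOf u v ∨ IsChildOf v u
  symm := by constructor; intro u v h; tauto
  loopless := by
    constructor; intro u h
    rcases h with ⟨h, _⟩ | ⟨h, _⟩ <;> omega


theorem ClientCanAux.of_invariant [DecidableEq α] {q : ℕ} {P : Finset α → Prop}
    (Inv : Finset α → Finset α → Prop)
    (hstep : ∀ C F, Inv C F → ∀ O ⊆ F, O.Nonempty → #O ≤ q + 1 →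
      ∃ x ∈ O, Inv (insert x C) (F \ O))
    (hfin : ∀ C, Inv C ∅ → P C) :
    ∀ fuel C F, #F ≤ fuel → Inv C F → ClientCanAux q P fuel C F := by
  intro fuel
  induction fuel with
  | zero =>
    intro C F hF hInv
    obtain rfl : F = ∅ := card_eq_zero.mp (Nat.le_zero.mp hF)
    exact ⟨rfl, hfin C hInv⟩
  | succ m ih =>
    intro C F hF hInv
    rw [ClientCanAux]
    split_ifs with hempty
    · exact hfin C (hempty ▸ hInv)
    · intro O hOF hO hOq
      obtain ⟨x, hx, hInv'⟩ := hstep C F hInv O hOF hO hOq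
      refine ⟨x, hx, ih _ _ ?_ hInv'⟩
      have := card_lt_card (sdiff_ssubset hOF hO)
      omega

theorem ClientCanForce.of_invariant [DecidableEq α] {X : Finset α} {q : ℕ}
    {P : Finset α → Prop} (Inv : Finset α → Finset α → Prop) (hstart : Inv ∅ X)
    (hstep : ∀ C F, Inv C F → ∀ O ⊆ F, O.Nonempty → #O ≤ q + 1 →
      ∃ x ∈ O, Inv (insert x C) (F \ O))
    (hfin : ∀ C, Inv C ∅ → P C) :
    ClientCanForce X q P :=
  ClientCanAux.of_invariant Inv hstep hfin _ _ _ le_rfl hstart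

theorem Set.ncard_sdiff_le_of_subset_union {β : Type*} [Finite β] {A A' O S S' : Set β}
    (hA : A' ⊆ A ∪ O) (hS : S ⊆ S') :
    (A' \ S').ncard ≤ (A \ S).ncard + (O \ S').ncard := by
  refine (Set.ncard_le_ncard ?_).trans (Set.ncard_union_le _ _)
  intro x ⟨hxA, hxS⟩
  rcases hA hxA with hx | hx
  · exact Or.inl ⟨hx, fun h => hxS (hS h)⟩
  · exact Or.inr ⟨hx, hxS⟩

namespace SimpleGraph

variable {V : Type*} {G G' : SimpleGraph V}

/-- Unlike `(fromRel G.Reachable).edgeSet` this contains the diagonal, so a pair outside it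
always joins two distinct components. -/
def reachablePairs (G : SimpleGraph V) : Set (Sym2 V) :=
  Sym2.fromRel (r := G.Reachable) ⟨fun _ _ => Reachable.symm⟩

theorem reachablePairs_mono (h : G ≤ G') : G.reachablePairs ⊆ G'.reachablePairs :=
  Sym2.ind fun _ _ huv => huv.mono h

theorem ConnectedComponent.card_lt_card_of_le_of_adj [Finite V] (h : G ≤ G') {u v : V}
    (hadj : G'.Adj u v) (hnr : ¬G.Reachable u v) :
    Nat.card G'.ConnectedComponent < Nat.card G.ConnectedComponent := by
  have := Fintype.ofFinite V
  classical
  simp only [Nat.card_eq_fintype_card]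
  refine Fintype.card_lt_of_surjective_not_injective _ (ConnectedComponent.surjective_map_ofLE h)
    fun hinj => hnr (ConnectedComponent.exact (hinj ?_))
  simp only [ConnectedComponent.map_mk]
  exact ConnectedComponent.sound hadj.reachable

theorem supp_connectedComponentMk_eq_insert_neighborSet (v : V) :
    (G.connectedComponentMk v).supp = insert v ((fromRel G.Reachable).neighborSet v) := by
  ext w
  simp only [ConnectedComponent.mem_supp_iff, ConnectedComponent.eq, Set.mem_insert_iff,
    mem_neighborSet, fromRel_adj]
  by_cases hwv : w = v
  · simp [hwv]
  · exact ⟨fun h => Or.inr ⟨Ne.symm hwv, Or.inr h⟩,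
      fun h => h.resolve_left hwv |>.2.elim Reachable.symm id⟩

theorem sum_ncard_supp_connectedComponentMk [Fintype V] :
    ∑ v, (G.connectedComponentMk v).supp.ncard =
      2 * (fromRel G.Reachable).edgeSet.ncard + Fintype.card V := by
  classical
  have hdeg (v : V) :
      (G.connectedComponentMk v).supp.ncard = (fromRel G.Reachable).degree v + 1 := by
    rw [supp_connectedComponentMk_eq_insert_neighborSet,
      Set.ncard_insert_of_notMem (notMem_neighborSet_self _),
      Set.ncard_eq_toFinset_card', ← card_neighborSet_eq_degree, Set.toFinset_card]
  simp only [hdeg, sum_add_distrib, sum_degrees_eq_twice_card_edges, sum_const, card_univ,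
    smul_eq_mul, mul_one, ← coe_edgeFinset, Set.ncard_coe_finset]

end SimpleGraph

section ComponentGame

open SimpleGraph

variable {V : Type*} [DecidableEq V]

theorem clientGraph_le_insert (C : Finset (Sym2 V)) (e : Sym2 V) :
    clientGraph C ≤ clientGraph (insert e C) :=
  fromEdgeSet_mono (by simp)

variable [Fintype V]

/-- Each merge of two of Client's components pays for the at most `q + 1` pairs offered in its
round. -/
def ComponentBudget (X : Finset (Sym2 V)) (q : ℕ) (C F : Finset (Sym2 V)) : Prop :=
  ((↑(X \ F) : Set (Sym2 V)) \ (clientGraph C).reachablePairs).ncard +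
    (q + 1) * Nat.card (clientGraph C).ConnectedComponent ≤ (q + 1) * Fintype.card V

theorem componentBudget_empty (X : Finset (Sym2 V)) (q : ℕ) : ComponentBudget X q ∅ X := by
  have hk : Nat.card (clientGraph (∅ : Finset (Sym2 V))).ConnectedComponent ≤ Fintype.card V :=
    Nat.card_eq_fintype_card (α := V) ▸
      Nat.card_le_card_of_surjective (clientGraph ∅).connectedComponentMk Quot.mk_surjective
  simp only [ComponentBudget, sdiff_self, bot_eq_empty, coe_empty, Set.empty_sdiff, Set.ncard_empty,
    zero_add]
  exact Nat.mul_le_mul_left _ hk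

/-- Client keeps the budget by taking an offered pair between two of his components whenever
there is one. -/
theorem ComponentBudget.exists_insert {X : Finset (Sym2 V)} {q : ℕ} {C F : Finset (Sym2 V)}
    (h : ComponentBudget X q C F) {O : Finset (Sym2 V)} (hO : O.Nonempty) (hOq : #O ≤ q + 1) :
    ∃ x ∈ O, ComponentBudget X q (insert x C) (F \ O) := by
  have hclaimed : (↑(X \ (F \ O)) : Set (Sym2 V)) ⊆ ↑(X \ F) ∪ ↑O := by
    intro e
    simp only [coe_sdiff, Set.mem_sdiff, mem_coe, Set.mem_union]
    tauto
  by_cases hmerge : ∃ e ∈ O, e ∉ (clientGraph C).reachablePairs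
  · obtain ⟨e, heO, he⟩ := hmerge
    induction e using Sym2.ind with
    | _ u v =>
    refine ⟨s(u, v), heO, ?_⟩
    have huv : u ≠ v := by
      rintro rfl
      exact he (Reachable.refl _)
    have hadj : (clientGraph (insert s(u, v) C)).Adj u v := by simp [clientGraph, huv]
    have hk := ConnectedComponent.card_lt_card_of_le_of_adj (clientGraph_le_insert _ _) hadj he
    have hcost := Set.ncard_sdiff_le_of_subset_union hclaimed
      (reachablePairs_mono (clientGraph_le_insert C s(u, v)))
    have hOcost : (↑O \ (clientGraph (insert s(u, v) C)).reachablePairs).ncard ≤ q + 1 :=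
      (Set.ncard_le_ncard Set.sdiff_subset).trans (by rwa [Set.ncard_coe_finset])
    unfold ComponentBudget at h ⊢
    nlinarith
  · push Not at hmerge
    obtain ⟨x, hx⟩ := hO
    refine ⟨x, hx, ?_⟩
    have hk := ConnectedComponent.card_le_card_of_le (clientGraph_le_insert C x)
    have hcost := Set.ncard_sdiff_le_of_subset_union hclaimed
      (reachablePairs_mono (clientGraph_le_insert C x))
    rw [Set.sdiff_eq_empty.mpr fun e he => reachablePairs_mono (clientGraph_le_insert C x)
      (hmerge e he), Set.ncard_empty, add_zero] at hcost
    unfold ComponentBudget at h ⊢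
    nlinarith

theorem ComponentBudget.exists_large_component [Nonempty V] {q : ℕ} {C : Finset (Sym2 V)}
    (h : ComponentBudget (⊤ : SimpleGraph V).edgeFinset q C ∅) :
    ∃ v, Fintype.card V ≤ ((clientGraph C).connectedComponentMk v).supp.ncard + 2 * (q + 1) := by
  set G := clientGraph C
  obtain ⟨v, -, hv⟩ := exists_max_image univ (fun v => (G.connectedComponentMk v).supp.ncard)
    univ_nonempty
  refine ⟨v, ?_⟩
  have hsum : ∑ w, (G.connectedComponentMk w).supp.ncard ≤
      Fintype.card V * (G.connectedComponentMk v).supp.ncard := by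
    simpa using sum_le_card_nsmul univ _ _ fun w _ => hv w (mem_univ w)
  have hk : 1 ≤ Nat.card G.ConnectedComponent := Nat.card_pos
  have hcover : (⊤ : SimpleGraph V).edgeSet.ncard ≤
      ((⊤ : SimpleGraph V).edgeSet \ G.reachablePairs).ncard +
        (fromRel G.Reachable).edgeSet.ncard := by
    refine (Set.ncard_le_ncard ?_).trans (Set.ncard_union_le _ _)
    intro e he
    by_cases hr : e ∈ G.reachablePairs
    · induction e using Sym2.ind with
      | _ u v => exact Or.inr ⟨(top_adj u v).mp he, Or.inl hr⟩
    · exact Or.inl ⟨he, hr⟩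
  obtain ⟨m, hm⟩ : ∃ m, Fintype.card V = m + 1 := Nat.exists_eq_add_one.mpr Fintype.card_pos
  have htop : (⊤ : SimpleGraph V).edgeSet.ncard * 2 = (m + 1) * m := by
    rw [← coe_edgeFinset, Set.ncard_coe_finset, card_edgeFinset_top_eq_card_choose_two, hm,
      ← Nat.add_one_mul_choose_eq, Nat.choose_one_right]
  unfold ComponentBudget at h
  rw [sdiff_empty, coe_edgeFinset] at h
  have := G.sum_ncard_supp_connectedComponentMk
  rw [hm] at h hsum this ⊢
  nlinarith

end ComponentGame

theorem Real.exp_neg_five_div_two_mul_add_three_div_two_le {ε : ℝ} (hε : 0 < ε) (hε1 : ε ≤ 1) :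
    exp (-5 / (2 * ε) + 3 / 2) ≤ ε / 2 := by
  have hexp : 2 / ε ≤ exp (5 / (2 * ε) - 3 / 2) := by
    refine le_trans ?_ (add_one_le_exp _)
    have hsplit : 2 / ε = 5 / (2 * ε) - 1 / (2 * ε) := by field_simp; norm_num
    have hhalf : 1 / 2 ≤ 1 / (2 * ε) := one_div_le_one_div_of_le (by positivity) (by linarith)
    linarith
  calc exp (-5 / (2 * ε) + 3 / 2) = (exp (5 / (2 * ε) - 3 / 2))⁻¹ := by
        rw [← exp_neg]; ring_nf
    _ ≤ (2 / ε)⁻¹ := inv_anti₀ (by positivity) hexp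
    _ = ε / 2 := inv_div _ _

/-- Theorem 2(iii): for every `0 < ε < 1` and `n` large enough, if `q ≤ (1-ε) n/2` then
`C(n,q) ≥ e^{-5/(2ε)+3/2} n`: Client can ensure a connected component with at least
`e^{-5/(2ε)+3/2} n` vertices. -/
theorem stmt4 (ε : ℝ) (hε : 0 < ε) (hε1 : ε < 1) :
    ∃ n₀ : ℕ, ∀ n : ℕ, n₀ ≤ n → ∀ q : ℕ, 0 < q → (q : ℝ) ≤ (1 - ε) * (n : ℝ) / 2 →
      ClientCanForce (Kboard n) q
        (fun C => ∃ v : Fin n,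
          Real.exp (-5 / (2 * ε) + 3 / 2) * (n : ℝ) ≤
            ((((clientGraph C).connectedComponentMk v).supp.ncard : ℝ))) := by
  refine ⟨⌈4 / ε⌉₊, fun n hn q _ hq => ?_⟩
  have hεn : 4 ≤ ε * n := by
    have := Nat.ceil_le.mp hn
    rwa [div_le_iff₀ hε, mul_comm] at this
  have : NeZero n := ⟨by rintro rfl; norm_num at hεn⟩
  have hc := Real.exp_neg_five_div_two_mul_add_three_div_two_le hε hε1.le
  refine ClientCanForce.of_invariant (ComponentBudget (Kboard n) q) (componentBudget_empty _ _)
    (fun C F h O _ => h.exists_insert) fun C h => ?_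
  obtain ⟨v, hv⟩ := ComponentBudget.exists_large_component h
  refine ⟨v, ?_⟩
  rw [Fintype.card_fin] at hv
  have hv' : (n : ℝ) ≤ ((clientGraph C).connectedComponentMk v).supp.ncard + 2 * (q + 1) := by
    exact_mod_cast hv
  nlinarith [mul_le_mul_of_nonneg_right hc (Nat.cast_nonneg (α := ℝ) n)]
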